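/- arXiv:2003.03154 — 3 statements merged into one kernel-verified Lean document; each statement's English description precedes it below -/
import Mathlib

section
/- Let τ > 0, K ≥ 0, M ≥ 0, and let 0 = t₀ < t₁ < ⋯ < t_m = τ be a partition of [0, τ]. Let y_F : [0, τ] → ℝⁿ be twice continuously differentiable with ‖y_F''(t)‖ ≤ K for all t ∈ [0, τ], and let ỹ_F : [0, τ] → ℝⁿ be its piecewise linear interpolant at the nodes t_j, i.e., ỹ_F(t) = y_F(t_{j−1}) + ((t − t_{j−1})/(t_j − t_{j−1}))·(y_F(t_j) − y_F(t_{j−1})) for t ∈ [t_{j−1}, t_j]. Let f_S : ℝⁿ → ℝⁿ be Lipschitz with constant M, and let y_S, ỹ_S : [0, τ] → ℝⁿ be differentiable with y_S'(t) = f_S(y_F(t) + y_S(t)), ỹ_S'(t) = f_S(ỹ_F(t) + ỹ_S(t)) and y_S(0) = ỹ_S(0). Then for every t ∈ [0, τ], ‖y_S(t) − ỹ_S(t)‖ ≤ (K/2)·M·τ·e^{Mτ}·max_{1 ≤ j ≤ m}(t_j − t_{j−1})². -/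
open Set

-- Taylor-type crude remainder bound
lemma taylor_crude {n : ℕ} {τ K : ℝ} (hτ : 0 ≤ τ)
    (yF yF' yF'' : ℝ → EuclideanSpace ℝ (Fin n))
    (hyF' : ∀ s ∈ Set.Icc (0 : ℝ) τ, HasDerivAt yF (yF' s) s)
    (hyF'' : ∀ s ∈ Set.Icc (0 : ℝ) τ, HasDerivAt yF' (yF'' s) s)
    (hKbound : ∀ s ∈ Set.Icc (0 : ℝ) τ, ‖yF'' s‖ ≤ K)
    {a b : ℝ} (ha : a ∈ Set.Icc (0 : ℝ) τ) (hb : b ∈ Set.Icc (0 : ℝ) τ) :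
    ‖yF b - yF a - (b - a) • yF' a‖ ≤ K * (b - a) ^ 2 := by
  set S := Set.uIcc a b with hS
  have hsub : S ⊆ Set.Icc (0 : ℝ) τ := Set.uIcc_subset_Icc ha hb
  have hconv : Convex ℝ S := convex_uIcc a b
  have haS : a ∈ S := Set.left_mem_uIcc
  have hbS : b ∈ S := Set.right_mem_uIcc
  -- first order bound on yF'
  have h1 : ∀ u ∈ S, ‖yF' u - yF' a‖ ≤ K * |b - a| := by
    intro u hu
    have := hconv.norm_image_sub_le_of_norm_hasDerivWithin_le
      (f' := yF'') (fun x hx => (hyF'' x (hsub hx)).hasDerivWithinAt)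
      (fun x hx => hKbound x (hsub hx)) haS hu
    have habs : |u - a| ≤ |b - a| := by
      rcases hu with ⟨h1', h2'⟩
      rcases le_total a b with h | h
      · simp only [min_eq_left h, max_eq_right h] at h1' h2'
        rw [abs_of_nonneg (by linarith), abs_of_nonneg (by linarith)]; linarith
      · simp only [min_eq_right h, max_eq_left h] at h1' h2'
        rw [abs_of_nonpos (by linarith), abs_of_nonpos (by linarith)]; linarith
    calc ‖yF' u - yF' a‖ ≤ K * ‖u - a‖ := this
      _ ≤ K * |b - a| := by
        have hK : 0 ≤ K := le_trans (norm_nonneg _) (hKbound a ha)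
        rw [Real.norm_eq_abs]
        exact mul_le_mul_of_nonneg_left habs hK
  -- apply MVT to g u = yF u - u • yF' a
  have h2 := hconv.norm_image_sub_le_of_norm_hasDerivWithin_le
    (f := fun u => yF u - u • yF' a) (f' := fun u => yF' u - yF' a)
    (fun x hx => ((hyF' x (hsub hx)).sub (((hasDerivAt_id x).smul_const (yF' a)).congr_deriv
      (one_smul ℝ _))).hasDerivWithinAt) h1 haS hbS
  have heq : (yF b - b • yF' a) - (yF a - a • yF' a) = yF b - yF a - (b - a) • yF' a := by
    rw [sub_smul]; abel
  rw [heq] at h2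
  calc ‖yF b - yF a - (b - a) • yF' a‖ ≤ K * |b - a| * ‖b - a‖ := h2
    _ = K * (b - a) ^ 2 := by rw [Real.norm_eq_abs, mul_assoc, ← abs_mul, abs_mul_self]; ring

-- interpolation error on one subinterval
lemma interp_err {n : ℕ} {τ K : ℝ} {a b s : ℝ} (hab : a < b)
    (ha : a ∈ Set.Icc (0 : ℝ) τ) (hb : b ∈ Set.Icc (0 : ℝ) τ)
    (hK : 0 ≤ K)
    (yF yF' yF'' : ℝ → EuclideanSpace ℝ (Fin n))
    (hyF' : ∀ s ∈ Set.Icc (0 : ℝ) τ, HasDerivAt yF (yF' s) s)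
    (hyF'' : ∀ s ∈ Set.Icc (0 : ℝ) τ, HasDerivAt yF' (yF'' s) s)
    (hKbound : ∀ s ∈ Set.Icc (0 : ℝ) τ, ‖yF'' s‖ ≤ K)
    (hs : s ∈ Set.Icc a b) :
    ‖(yF a + ((s - a) / (b - a)) • (yF b - yF a)) - yF s‖ ≤ (K / 2) * (b - a) ^ 2 := by
  obtain ⟨hs1, hs2⟩ := hs
  have hsτ : s ∈ Set.Icc (0 : ℝ) τ := ⟨le_trans ha.1 hs1, le_trans hs2 hb.2⟩
  set l : ℝ := (s - a) / (b - a) with hl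
  have hba : (0 : ℝ) < b - a := by linarith
  have hl0 : 0 ≤ l := div_nonneg (by linarith) hba.le
  have hl1 : l ≤ 1 := (div_le_one hba).mpr (by linarith)
  have hsa : s - a = l * (b - a) := by rw [hl, div_mul_cancel₀ _ hba.ne']
  have key : (yF a + l • (yF b - yF a)) - yF s
      = (1 - l) • (yF a - yF s - (a - s) • yF' s) + l • (yF b - yF s - (b - s) • yF' s)
        + ((1 - l) * (a - s) + l * (b - s)) • yF' s := by
    module
  have hc : (1 - l) * (a - s) + l * (b - s) = 0 := by nlinarith [hsa]
  rw [hc, zero_smul, add_zero] at key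
  have hTa := taylor_crude (le_trans ha.1 ha.2) yF yF' yF'' hyF' hyF'' hKbound hsτ ha
  have hTb := taylor_crude (le_trans hb.1 hb.2) yF yF' yF'' hyF' hyF'' hKbound hsτ hb
  have hnorm : ‖(yF a + l • (yF b - yF a)) - yF s‖
      ≤ (1 - l) * (K * (a - s) ^ 2) + l * (K * (b - s) ^ 2) := by
    rw [key]
    calc ‖(1 - l) • (yF a - yF s - (a - s) • yF' s) + l • (yF b - yF s - (b - s) • yF' s)‖
        ≤ ‖(1 - l) • (yF a - yF s - (a - s) • yF' s)‖ + ‖l • (yF b - yF s - (b - s) • yF' s)‖ :=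
          norm_add_le _ _
      _ ≤ (1 - l) * (K * (a - s) ^ 2) + l * (K * (b - s) ^ 2) := by
          rw [norm_smul, norm_smul, Real.norm_eq_abs, Real.norm_eq_abs,
            abs_of_nonneg (by linarith : (0:ℝ) ≤ 1 - l), abs_of_nonneg hl0]
          exact add_le_add (mul_le_mul_of_nonneg_left hTa (by linarith))
            (mul_le_mul_of_nonneg_left hTb hl0)
  have hsa2 : (a - s) ^ 2 = l ^ 2 * (b - a) ^ 2 := by nlinarith [hsa]
  have hsb2 : (b - s) ^ 2 = (1 - l) ^ 2 * (b - a) ^ 2 := by nlinarith [hsa]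
  rw [hsa2, hsb2] at hnorm
  refine hnorm.trans ?_
  nlinarith [sq_nonneg (b - a), sq_nonneg (2 * l - 1), mul_nonneg hK (sq_nonneg (b - a)),
    mul_nonneg (mul_nonneg hK (sq_nonneg (b - a))) (mul_nonneg hl0 (by linarith : (0:ℝ) ≤ 1 - l))]

/-- Semi-discrete additive RKC error bound: with a partition `0 = t₀ < ⋯ < t_m = τ`,
`y_F` twice continuously differentiable with `‖y_F''‖ ≤ K`, `ỹ_F` its piecewise linear
interpolant at the nodes, `f_S` `M`-Lipschitz, `y_S' = f_S(y_F + y_S)`,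
`ỹ_S' = f_S(ỹ_F + ỹ_S)` and `y_S(0) = ỹ_S(0)`, one has for each `t ∈ [0, τ]`
`‖y_S(t) - ỹ_S(t)‖ ≤ (K/2) M τ e^{Mτ} · max_{1 ≤ j ≤ m} (t_j - t_{j-1})²`. -/
theorem stmt_14 (n m : ℕ) (hm : 1 ≤ m) (τ K M : ℝ) (hτ : 0 < τ) (hK : 0 ≤ K) (hM : 0 ≤ M)
    (t : ℕ → ℝ) (ht0 : t 0 = 0) (htm : t m = τ)
    (htmono : ∀ j k : ℕ, j < k → k ≤ m → t j < t k)
    (yF yF' yF'' ytF : ℝ → EuclideanSpace ℝ (Fin n))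
    (hyF' : ∀ s ∈ Set.Icc (0 : ℝ) τ, HasDerivAt yF (yF' s) s)
    (hyF'' : ∀ s ∈ Set.Icc (0 : ℝ) τ, HasDerivAt yF' (yF'' s) s)
    (hyF''cont : ContinuousOn yF'' (Set.Icc 0 τ))
    (hKbound : ∀ s ∈ Set.Icc (0 : ℝ) τ, ‖yF'' s‖ ≤ K)
    (hinterp : ∀ j : ℕ, 1 ≤ j → j ≤ m → ∀ s ∈ Set.Icc (t (j - 1)) (t j),
      ytF s = yF (t (j - 1))
        + ((s - t (j - 1)) / (t j - t (j - 1))) • (yF (t j) - yF (t (j - 1))))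
    (fS : EuclideanSpace ℝ (Fin n) → EuclideanSpace ℝ (Fin n))
    (hfS : ∀ x y : EuclideanSpace ℝ (Fin n), ‖fS x - fS y‖ ≤ M * ‖x - y‖)
    (yS ytS : ℝ → EuclideanSpace ℝ (Fin n))
    (hyS : ∀ s ∈ Set.Icc (0 : ℝ) τ, HasDerivAt yS (fS (yF s + yS s)) s)
    (hytS : ∀ s ∈ Set.Icc (0 : ℝ) τ, HasDerivAt ytS (fS (ytF s + ytS s)) s)
    (h0 : yS 0 = ytS 0) :
    ∀ s ∈ Set.Icc (0 : ℝ) τ,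
      ‖yS s - ytS s‖ ≤ (K / 2) * M * τ * Real.exp (M * τ) *
        (Finset.Icc 1 m).sup' (Finset.nonempty_Icc.mpr hm)
          (fun j => (t j - t (j - 1)) ^ 2) := by
  set H : ℝ := (Finset.Icc 1 m).sup' (Finset.nonempty_Icc.mpr hm)
      (fun j => (t j - t (j - 1)) ^ 2) with hH
  have hHj : ∀ j : ℕ, 1 ≤ j → j ≤ m → (t j - t (j - 1)) ^ 2 ≤ H := by
    intro j h1 h2
    exact Finset.le_sup' (fun j : ℕ => (t j - t (j - 1)) ^ 2)
      (Finset.mem_Icc.mpr ⟨h1, h2⟩)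
  have hH0 : 0 ≤ H := le_trans (sq_nonneg _) (hHj 1 le_rfl hm)
  -- monotonicity facts
  have ht_le : ∀ j k : ℕ, j ≤ k → k ≤ m → t j ≤ t k := by
    intro j k hjk hkm
    rcases eq_or_lt_of_le hjk with h | h
    · rw [h]
    · exact (htmono j k h hkm).le
  have htIcc : ∀ j : ℕ, j ≤ m → t j ∈ Set.Icc (0 : ℝ) τ := by
    intro j hj
    exact ⟨ht0 ▸ ht_le 0 j (Nat.zero_le _) hj, htm ▸ ht_le j m hj le_rfl⟩
  -- coverage
  have hcover : ∀ s ∈ Set.Icc (0 : ℝ) τ, ∃ j : ℕ, 1 ≤ j ∧ j ≤ m ∧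
      s ∈ Set.Icc (t (j - 1)) (t j) := by
    intro s hs
    obtain ⟨hs1, hs2⟩ := hs
    have hex : ∃ j : ℕ, s ≤ t j := ⟨m, htm ▸ hs2⟩
    classical
    set j := Nat.find hex with hj
    have hjP : s ≤ t j := Nat.find_spec hex
    have hjm : j ≤ m := Nat.find_le (htm ▸ hs2)
    rcases Nat.eq_zero_or_pos j with h | h
    · have : s ≤ 0 := by rw [← ht0]; exact h ▸ hjP
      have hs0 : s = 0 := le_antisymm this hs1
      refine ⟨1, le_rfl, hm, ?_, ?_⟩
      · simp [hs0, ht0]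
      · rw [hs0, ← ht0]; exact (htmono 0 1 Nat.zero_lt_one hm).le
    · have hlt : t (j - 1) < s := by
        have := Nat.find_min hex (Nat.sub_lt h Nat.one_pos)
        push_neg at this
        exact this
      exact ⟨j, h, hjm, hlt.le, hjP⟩
  -- interpolation error bound everywhere
  have hinterr : ∀ s ∈ Set.Icc (0 : ℝ) τ, ‖yF s - ytF s‖ ≤ (K / 2) * H := by
    intro s hs
    obtain ⟨j, hj1, hjm, hsj⟩ := hcover s hs
    have hab : t (j - 1) < t j := htmono (j - 1) j (Nat.sub_lt hj1 Nat.one_pos) hjm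
    have herr := interp_err (τ := τ) hab (htIcc _ (le_trans (Nat.sub_le j 1) hjm))
      (htIcc _ hjm) hK yF yF' yF'' hyF' hyF'' hKbound hsj
    rw [← hinterp j hj1 hjm s hsj] at herr
    rw [norm_sub_rev]
    exact herr.trans (by
      have := hHj j hj1 hjm
      nlinarith)
  -- Gronwall
  intro s hs
  have hdcont : ContinuousOn (fun u => yS u - ytS u) (Set.Icc 0 τ) := by
    intro x hx
    exact (((hyS x hx).continuousAt.sub (hytS x hx).continuousAt)).continuousWithinAt
  have hd' : ∀ x ∈ Set.Ico (0 : ℝ) τ, HasDerivWithinAt (fun u => yS u - ytS u)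
      (fS (yF x + yS x) - fS (ytF x + ytS x)) (Set.Ici x) x := by
    intro x hx
    have hx' : x ∈ Set.Icc (0 : ℝ) τ := ⟨hx.1, hx.2.le⟩
    exact ((hyS x hx').sub (hytS x hx')).hasDerivWithinAt
  have hbound : ∀ x ∈ Set.Ico (0 : ℝ) τ,
      ‖fS (yF x + yS x) - fS (ytF x + ytS x)‖
        ≤ M * ‖yS x - ytS x‖ + M * ((K / 2) * H) := by
    intro x hx
    have hx' : x ∈ Set.Icc (0 : ℝ) τ := ⟨hx.1, hx.2.le⟩
    have habel : (yF x + yS x) - (ytF x + ytS x) = (yF x - ytF x) + (yS x - ytS x) := by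
      abel
    calc ‖fS (yF x + yS x) - fS (ytF x + ytS x)‖
        ≤ M * ‖(yF x + yS x) - (ytF x + ytS x)‖ := hfS _ _
      _ = M * ‖(yF x - ytF x) + (yS x - ytS x)‖ := by rw [habel]
      _ ≤ M * (‖yF x - ytF x‖ + ‖yS x - ytS x‖) := mul_le_mul_of_nonneg_left (norm_add_le _ _) hM
      _ ≤ M * ‖yS x - ytS x‖ + M * ((K / 2) * H) := by
          have := hinterr x hx'
          nlinarith
  have hδ : ‖(fun u => yS u - ytS u) 0‖ ≤ 0 := by simp [h0]
  have hG := norm_le_gronwallBound_of_norm_deriv_right_le hdcont hd' hδ hbound s hs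
  rw [sub_zero] at hG
  refine hG.trans ?_
  rcases eq_or_lt_of_le hM with h | h
  · rw [← h]
    rw [show (0:ℝ) * ((K / 2) * H) = 0 by ring]
    rw [gronwallBound_K0]
    simp
  · rw [gronwallBound_of_K_ne_0 (ne_of_gt h)]
    have hC : 0 ≤ (K / 2) * H := mul_nonneg (by linarith) hH0
    have hdiv : M * ((K / 2) * H) / M = (K / 2) * H := by
      field_simp
    rw [hdiv]
    simp only [zero_mul, zero_add]
    have hexple : Real.exp (M * s) ≤ Real.exp (M * τ) :=
      Real.exp_le_exp.mpr (mul_le_mul_of_nonneg_left hs.2 hM)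
    have hkey : Real.exp (M * τ) - 1 ≤ M * τ * Real.exp (M * τ) := by
      have h1 := Real.add_one_le_exp (-(M * τ))
      have h2 : Real.exp (-(M * τ)) * Real.exp (M * τ) = 1 := by
        rw [← Real.exp_add]; simp
      nlinarith [Real.exp_pos (M * τ)]
    calc (K / 2) * H * (Real.exp (M * s) - 1)
        ≤ (K / 2) * H * (Real.exp (M * τ) - 1) :=
          mul_le_mul_of_nonneg_left (by linarith) hC
      _ ≤ (K / 2) * H * (M * τ * Real.exp (M * τ)) :=
          mul_le_mul_of_nonneg_left hkey hC
      _ = (K / 2) * M * τ * Real.exp (M * τ) * H := by ring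
end

section
/- Under the hypotheses of the semi-discrete additive RKC error bound — τ > 0, nodes 0 = t₀ < t₁ < ⋯ < t_m = τ, y_F twice continuously differentiable on [0, τ] with ‖y_F''‖ ≤ K, ỹ_F its piecewise linear interpolant at the nodes, f_S Lipschitz with constant M, and y_S' = f_S(y_F + y_S), ỹ_S' = f_S(ỹ_F + ỹ_S) with y_S(0) = ỹ_S(0) — one has, since each gap satisfies t_j − t_{j−1} ≤ τ, the nonstiff-regime estimate ‖y_S(t) − ỹ_S(t)‖ ≤ (K/2)·M·e^{Mτ}·τ³ for all t ∈ [0, τ]; i.e., the interpolation introduces a third-order local error. -/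
private lemma interp_identity {E : Type*} [AddCommGroup E] [Module ℝ E] (yFs yFa yFb dFs : E)
    (θ a b s : ℝ) (hθab : θ * (b - a) = s - a) :
    yFs - (yFa + θ • (yFb - yFa))
      = -((1 - θ) • (yFa - yFs - (a - s) • dFs) + θ • (yFb - yFs - (b - s) • dFs)) := by
  match_scalars
  · ring
  · ring
  · ring
  · linear_combination -hθab

private lemma exp_sub_one_le (x : ℝ) (hx : 0 ≤ x) : Real.exp x - 1 ≤ x * Real.exp x := by
  have h := Real.add_one_le_exp (-x)
  rw [Real.exp_neg, inv_eq_one_div, le_div_iff₀ (Real.exp_pos x)] at h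
  nlinarith [Real.exp_pos x]

set_option maxHeartbeats 1000000 in
/-- Nonstiff-regime estimate for the semi-discrete additive RKC scheme: under the same
hypotheses as the general error bound, since every gap satisfies `t_j - t_{j-1} ≤ τ`,
one has `‖y_S(t) - ỹ_S(t)‖ ≤ (K/2) M e^{Mτ} τ³` for all `t ∈ [0, τ]`, i.e. the
interpolation introduces a third-order local error. -/
theorem stmt_15 (n m : ℕ) (hm : 1 ≤ m) (τ K M : ℝ) (hτ : 0 < τ) (hK : 0 ≤ K) (hM : 0 ≤ M)
    (t : ℕ → ℝ) (ht0 : t 0 = 0) (htm : t m = τ)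
    (htmono : ∀ j k : ℕ, j < k → k ≤ m → t j < t k)
    (yF yF' yF'' ytF : ℝ → EuclideanSpace ℝ (Fin n))
    (hyF' : ∀ s ∈ Set.Icc (0 : ℝ) τ, HasDerivAt yF (yF' s) s)
    (hyF'' : ∀ s ∈ Set.Icc (0 : ℝ) τ, HasDerivAt yF' (yF'' s) s)
    (hyF''cont : ContinuousOn yF'' (Set.Icc 0 τ))
    (hKbound : ∀ s ∈ Set.Icc (0 : ℝ) τ, ‖yF'' s‖ ≤ K)
    (hinterp : ∀ j : ℕ, 1 ≤ j → j ≤ m → ∀ s ∈ Set.Icc (t (j - 1)) (t j),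
      ytF s = yF (t (j - 1))
        + ((s - t (j - 1)) / (t j - t (j - 1))) • (yF (t j) - yF (t (j - 1))))
    (fS : EuclideanSpace ℝ (Fin n) → EuclideanSpace ℝ (Fin n))
    (hfS : ∀ x y : EuclideanSpace ℝ (Fin n), ‖fS x - fS y‖ ≤ M * ‖x - y‖)
    (yS ytS : ℝ → EuclideanSpace ℝ (Fin n))
    (hyS : ∀ s ∈ Set.Icc (0 : ℝ) τ, HasDerivAt yS (fS (yF s + yS s)) s)
    (hytS : ∀ s ∈ Set.Icc (0 : ℝ) τ, HasDerivAt ytS (fS (ytF s + ytS s)) s)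
    (h0 : yS 0 = ytS 0) :
    ∀ s ∈ Set.Icc (0 : ℝ) τ,
      ‖yS s - ytS s‖ ≤ (K / 2) * M * Real.exp (M * τ) * τ ^ 3 := by
  -- monotone version of htmono
  have hmono' : ∀ j k : ℕ, j ≤ k → k ≤ m → t j ≤ t k := by
    intro j k hjk hkm
    rcases lt_or_eq_of_le hjk with h | h
    · exact (htmono j k h hkm).le
    · rw [h]
  -- Lipschitz bound for yF'
  have hLip : ∀ u ∈ Set.Icc (0:ℝ) τ, ∀ v ∈ Set.Icc (0:ℝ) τ,
      ‖yF' v - yF' u‖ ≤ K * ‖v - u‖ := by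
    intro u hu v hv
    exact (convex_Icc (0:ℝ) τ).norm_image_sub_le_of_norm_hasDerivWithin_le
      (fun x hx => (hyF'' x hx).hasDerivWithinAt) (fun x hx => hKbound x hx)
      hu hv
  -- crude Taylor remainder bound
  have htaylor : ∀ s ∈ Set.Icc (0:ℝ) τ, ∀ c ∈ Set.Icc (0:ℝ) τ,
      ‖yF c - yF s - (c - s) • yF' s‖ ≤ K * (c - s) ^ 2 := by
    intro s hs c hc
    set S : Set ℝ := Set.Icc (min s c) (max s c) with hS
    have hSsub : S ⊆ Set.Icc (0:ℝ) τ := by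
      apply Set.Icc_subset_Icc
      · exact le_min hs.1 hc.1
      · exact max_le hs.2 hc.2
    have hφ : ∀ x ∈ S, HasDerivWithinAt (fun u => yF u - (u - s) • yF' s)
        (yF' x - yF' s) S x := by
      intro x hx
      have h1 := (hyF' x (hSsub hx)).hasDerivWithinAt (s := S)
      have h2 : HasDerivWithinAt (fun u : ℝ => (u - s) • yF' s) ((1:ℝ) • yF' s) S x :=
        (((hasDerivAt_id x).sub_const s).smul_const (yF' s)).hasDerivWithinAt
      have h3 := h1.sub h2
      rw [one_smul] at h3
      exact h3
    have hbd : ∀ x ∈ S, ‖yF' x - yF' s‖ ≤ K * |c - s| := by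
      intro x hx
      refine (hLip s hs x (hSsub hx)).trans ?_
      have hxs : |x - s| ≤ |c - s| := by
        rcases hx with ⟨h1, h2⟩
        rcases le_total s c with h | h
        · rw [abs_of_nonneg (by simp [min_eq_left h] at h1; linarith),
            abs_of_nonneg (by linarith)]
          simp [max_eq_right h] at h2; linarith
        · rw [abs_of_nonpos (by simp [max_eq_left h] at h2; linarith),
            abs_of_nonpos (by linarith)]
          simp [min_eq_right h] at h1; linarith
      simpa [Real.norm_eq_abs] using mul_le_mul_of_nonneg_left hxs hK
    have hsS : s ∈ S := Set.mem_Icc.2 ⟨min_le_left _ _, le_max_left _ _⟩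
    have hcS : c ∈ S := Set.mem_Icc.2 ⟨min_le_right _ _, le_max_right _ _⟩
    have := (convex_Icc _ _).norm_image_sub_le_of_norm_hasDerivWithin_le hφ hbd hsS hcS
    simp only [sub_self, zero_smul, sub_zero] at this
    calc ‖yF c - yF s - (c - s) • yF' s‖
        = ‖yF c - (c - s) • yF' s - yF s‖ := by rw [sub_right_comm]
      _ ≤ K * |c - s| * ‖c - s‖ := this
      _ = K * (c - s) ^ 2 := by
          rw [Real.norm_eq_abs, mul_assoc, ← abs_mul, abs_mul_self]
          ring
  -- interpolation error bound
  have hint : ∀ s ∈ Set.Icc (0:ℝ) τ, ‖yF s - ytF s‖ ≤ K / 2 * τ ^ 2 := by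
    intro s hs
    -- locate an interval containing s
    have hex : ∃ j : ℕ, s ≤ t j := ⟨m, htm ▸ hs.2⟩
    obtain ⟨j, hj1, hjm, hsj⟩ :
        ∃ j : ℕ, 1 ≤ j ∧ j ≤ m ∧ s ∈ Set.Icc (t (j - 1)) (t j) := by
      set j0 := Nat.find hex with hj0
      have hfind := Nat.find_spec hex
      rcases Nat.eq_zero_or_pos j0 with h0' | hpos
      · refine ⟨1, le_refl _, hm, ?_⟩
        have : s ≤ t 0 := h0' ▸ hfind
        have hs0 : s = 0 := le_antisymm (ht0 ▸ this) hs.1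
        constructor
        · simp [hs0, ht0]
        · rw [hs0, ← ht0]; exact (htmono 0 1 one_pos hm).le
      · have hjm : j0 ≤ m := Nat.find_le (htm ▸ hs.2)
        have hprev : ¬ s ≤ t (j0 - 1) := Nat.find_min hex (Nat.sub_lt hpos one_pos)
        exact ⟨j0, hpos, hjm, ⟨(not_le.1 hprev).le, hfind⟩⟩
    set a := t (j - 1) with ha
    set b := t j with hb
    have hab : a < b := htmono (j - 1) j (Nat.sub_lt hj1 one_pos) hjm
    have ha0 : 0 ≤ a := ht0 ▸ hmono' 0 (j - 1) (Nat.zero_le _) (le_trans (Nat.sub_le _ _) hjm)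
    have hbτ : b ≤ τ := htm ▸ hmono' j m hjm le_rfl
    have haI : a ∈ Set.Icc (0:ℝ) τ := ⟨ha0, le_trans hab.le hbτ⟩
    have hbI : b ∈ Set.Icc (0:ℝ) τ := ⟨le_trans ha0 hab.le, hbτ⟩
    have hba : b - a ≠ 0 := sub_ne_zero.2 hab.ne'
    obtain ⟨θ, hθab, hθ0, hθ1, hval⟩ : ∃ θ : ℝ, θ * (b - a) = s - a ∧ 0 ≤ θ ∧ θ ≤ 1 ∧
        ytF s = yF a + θ • (yF b - yF a) := by
      refine ⟨(s - a) / (b - a), div_mul_cancel₀ _ hba,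
        div_nonneg (by linarith [hsj.1]) (by linarith), ?_, hinterp j hj1 hjm s hsj⟩
      rw [div_le_one (by linarith)]; linarith [hsj.2]
    have hRa := htaylor s hs a haI
    have hRb := htaylor s hs b hbI
    clear_value a b
    have hiden : yF s - ytF s
        = -((1 - θ) • (yF a - yF s - (a - s) • yF' s) + θ • (yF b - yF s - (b - s) • yF' s)) := by
      rw [hval]
      exact interp_identity (yF s) (yF a) (yF b) (yF' s) θ a b s hθab
    rw [hiden, norm_neg]
    have h1 : ‖(1 - θ) • (yF a - yF s - (a - s) • yF' s) + θ • (yF b - yF s - (b - s) • yF' s)‖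
        ≤ (1 - θ) * (K * (a - s)^2) + θ * (K * (b - s)^2) := by
      refine (norm_add_le _ _).trans ?_
      gcongr
      · rw [norm_smul, Real.norm_eq_abs, abs_of_nonneg (by linarith)]
        exact mul_le_mul_of_nonneg_left hRa (by linarith)
      · rw [norm_smul, Real.norm_eq_abs, abs_of_nonneg hθ0]
        exact mul_le_mul_of_nonneg_left hRb hθ0
    refine h1.trans ?_
    have hsa : s - a = θ * (b - a) := hθab.symm
    have hbs : b - s = (1 - θ) * (b - a) := by linarith [hθab]
    have hbaτ : b - a ≤ τ := by linarith
    have key : (1 - θ) * (K * (a - s)^2) + θ * (K * (b - s)^2)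
        = K * (b - a)^2 * (θ * (1 - θ)) := by
      have : a - s = -(θ * (b - a)) := by linarith
      rw [this, hbs]; ring
    rw [key]
    have h4 : θ * (1 - θ) ≤ 1/4 := by nlinarith [sq_nonneg (θ - 1/2)]
    have h5 : (b - a)^2 ≤ τ^2 := by nlinarith
    have h6 : K * (b - a)^2 * (θ * (1 - θ)) ≤ K * τ^2 * (1/4) := by
      apply mul_le_mul (mul_le_mul_of_nonneg_left h5 hK) h4
        (mul_nonneg hθ0 (by linarith)) (by positivity)
    nlinarith [mul_nonneg hK (sq_nonneg τ)]
  -- Grönwall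
  set ε : ℝ := M * (K / 2 * τ ^ 2) with hε
  have hgron : ∀ s ∈ Set.Icc (0:ℝ) τ,
      ‖yS s - ytS s‖ ≤ gronwallBound 0 M ε (s - 0) := by
    apply norm_le_gronwallBound_of_norm_deriv_right_le
      (f' := fun u => fS (yF u + yS u) - fS (ytF u + ytS u))
    · intro u hu
      exact (((hyS u hu).sub (hytS u hu)).continuousAt).continuousWithinAt
    · intro x hx
      have hx' : x ∈ Set.Icc (0:ℝ) τ := Set.Ico_subset_Icc_self hx
      exact (((hyS x hx').sub (hytS x hx')).hasDerivWithinAt)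
    · simp [h0]
    · intro x hx
      have hx' : x ∈ Set.Icc (0:ℝ) τ := Set.Ico_subset_Icc_self hx
      refine (hfS _ _).trans ?_
      have h2 : ‖(yF x + yS x) - (ytF x + ytS x)‖ ≤ ‖yF x - ytF x‖ + ‖yS x - ytS x‖ := by
        rw [add_sub_add_comm]; exact norm_add_le _ _
      have h3 := hint x hx'
      calc M * ‖(yF x + yS x) - (ytF x + ytS x)‖
          ≤ M * (‖yF x - ytF x‖ + ‖yS x - ytS x‖) := mul_le_mul_of_nonneg_left h2 hM
        _ ≤ M * (K / 2 * τ ^ 2 + ‖yS x - ytS x‖) := by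
            apply mul_le_mul_of_nonneg_left _ hM; linarith
        _ = M * ‖yS x - ytS x‖ + ε := by rw [hε]; ring
  -- conclude
  intro s hs
  refine (hgron s hs).trans ?_
  rw [sub_zero]
  rcases eq_or_ne M 0 with hM0 | hM0
  · rw [hM0, gronwallBound_K0]
    simp [hε, hM0]
  · rw [gronwallBound_of_K_ne_0 hM0]
    simp only [zero_mul, zero_add]
    have hεM : ε / M = K / 2 * τ ^ 2 := by rw [hε, mul_div_cancel_left₀ _ hM0]
    rw [hεM]
    have hMs : 0 ≤ M * s := mul_nonneg hM hs.1
    have hMτ : M * s ≤ M * τ := mul_le_mul_of_nonneg_left hs.2 hM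
    have h1 : Real.exp (M * s) - 1 ≤ (M * s) * Real.exp (M * s) :=
      exp_sub_one_le _ hMs
    have h2 : (M * s) * Real.exp (M * s) ≤ (M * τ) * Real.exp (M * τ) := by
      apply mul_le_mul hMτ (Real.exp_le_exp.2 hMτ) (Real.exp_pos _).le (by linarith)
    calc K / 2 * τ ^ 2 * (Real.exp (M * s) - 1)
        ≤ K / 2 * τ ^ 2 * ((M * τ) * Real.exp (M * τ)) := by
          apply mul_le_mul_of_nonneg_left (h1.trans h2) (by positivity)
      _ = K / 2 * M * Real.exp (M * τ) * τ ^ 3 := by ring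
end

section
/- Let m ≥ 2 be an integer, β > 0, ρ > 0, τ > 0 with τρ ≤ βm², let K ≥ 0, M ≥ 0, and let the partition nodes of [0, τ] be t_j = d_j·τ with d_j = (j² − 1)/(m² − 1) for j = 1, …, m (so t₁ = 0 and t_m = τ). Let y_F : [0, τ] → ℝⁿ be twice continuously differentiable with ‖y_F''(t)‖ ≤ K, let ỹ_F be its piecewise linear interpolant at the nodes t_j, let f_S : ℝⁿ → ℝⁿ be Lipschitz with constant M, and let y_S, ỹ_S : [0, τ] → ℝⁿ be differentiable with y_S' = f_S(y_F + y_S), ỹ_S' = f_S(ỹ_F + ỹ_S) and y_S(0) = ỹ_S(0). Then for every t ∈ [0, τ], ‖y_S(t) − ỹ_S(t)‖ ≤ 2KMβ·e^{Mτ}·τ²/ρ; i.e., in the stiff regime the interpolation introduces only a second-order local error, causing order reduction of the second-order additive RKC scheme. -/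
open Set

section Aux

variable {E : Type*} [NormedAddCommGroup E] [NormedSpace ℝ E]

private lemma aux_sq {f f' : ℝ → E} {K a b : ℝ}
    (hf : ∀ u ∈ Icc a b, HasDerivAt f (f' u) u) (hfa : f a = 0)
    (hbd : ∀ u ∈ Icc a b, ‖f' u‖ ≤ K * (u - a)) :
    ∀ s ∈ Icc a b, ‖f s‖ ≤ K * (s - a) ^ 2 / 2 := by
  have hB : ∀ x : ℝ, HasDerivAt (fun u => K * (u - a) ^ 2 / 2) (K * (x - a)) x := by
    intro x
    have h := ((((hasDerivAt_id x).sub_const a).pow 2).const_mul K).div_const 2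
    refine h.congr_deriv ?_
    simp only [id_eq]
    push_cast
    ring
  intro s hs
  exact image_norm_le_of_norm_deriv_right_le_deriv_boundary
    (fun u hu => (hf u hu).continuousAt.continuousWithinAt)
    (fun x hx => (hf x (Ico_subset_Icc_self hx)).hasDerivWithinAt)
    (by simp [hfa]) hB (fun x hx => hbd x (Ico_subset_Icc_self hx)) hs

private lemma aux_taylor_left {f f' f'' : ℝ → E} {K a b : ℝ}
    (hf : ∀ u ∈ Icc a b, HasDerivAt f (f' u) u)
    (hf' : ∀ u ∈ Icc a b, HasDerivAt f' (f'' u) u)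
    (hK : ∀ u ∈ Icc a b, ‖f'' u‖ ≤ K) :
    ∀ s ∈ Icc a b, ‖f s - f a - (s - a) • f' a‖ ≤ K * (s - a) ^ 2 / 2 := by
  have hmv : ∀ u ∈ Icc a b, ‖f' u - f' a‖ ≤ K * (u - a) :=
    norm_image_sub_le_of_norm_deriv_le_segment'
      (fun u hu => (hf' u hu).hasDerivWithinAt)
      (fun u hu => hK u (Ico_subset_Icc_self hu))
  have hg : ∀ u ∈ Icc a b,
      HasDerivAt (fun u => f u - f a - (u - a) • f' a) (f' u - f' a) u := by
    intro u hu
    have h2 : HasDerivAt (fun u : ℝ => (u - a) • f' a) (f' a) u := by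
      simpa using ((hasDerivAt_id u).sub_const a).smul_const (f' a)
    exact ((hf u hu).sub_const (f a)).sub h2
  exact aux_sq hg (by simp) hmv

private lemma aux_taylor_right {f f' f'' : ℝ → E} {K a b : ℝ}
    (hf : ∀ u ∈ Icc a b, HasDerivAt f (f' u) u)
    (hf' : ∀ u ∈ Icc a b, HasDerivAt f' (f'' u) u)
    (hK : ∀ u ∈ Icc a b, ‖f'' u‖ ≤ K) :
    ∀ s ∈ Icc a b, ‖f s - f b - (s - b) • f' b‖ ≤ K * (b - s) ^ 2 / 2 := by
  intro s hs
  set c : ℝ := a + b with hc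
  have hmem : ∀ u ∈ Icc a b, c - u ∈ Icc a b := fun u hu => ⟨by simp [hc]; linarith [hu.2], by simp [hc]; linarith [hu.1]⟩
  have hneg : ∀ u : ℝ, HasDerivAt (fun v : ℝ => c - v) (-1) u := by
    intro u
    simpa using (hasDerivAt_id u).const_sub c
  have hF : ∀ u ∈ Icc a b, HasDerivAt (fun v => f (c - v)) (-f' (c - u)) u := by
    intro u hu
    have := (hf (c - u) (hmem u hu)).scomp u (hneg u)
    simpa [Function.comp_def] using this
  have hF' : ∀ u ∈ Icc a b, HasDerivAt (fun v => -f' (c - v)) (f'' (c - u)) u := by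
    intro u hu
    have := ((hf' (c - u) (hmem u hu)).scomp u (hneg u)).neg
    simpa [Function.comp_def, Pi.neg_def] using this
  have hKF : ∀ u ∈ Icc a b, ‖f'' (c - u)‖ ≤ K := fun u hu => hK _ (hmem u hu)
  have hcs : c - s ∈ Icc a b := hmem s hs
  have key := aux_taylor_left hF hF' hKF (c - s) hcs
  have e1 : c - (c - s) = s := by ring
  have e2 : c - a = b := by simp [hc]
  have e3 : (c - s) - a = b - s := by simp [hc]; ring
  rw [e1, e2, e3] at key
  have hv : f s - f b - (s - b) • f' b = f s - f b - (b - s) • -f' b := by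
    module
  rw [hv]
  exact key

private lemma aux_interp {f f' f'' : ℝ → E} {K a b : ℝ} (hab : a < b)
    (hf : ∀ u ∈ Icc a b, HasDerivAt f (f' u) u)
    (hf' : ∀ u ∈ Icc a b, HasDerivAt f' (f'' u) u)
    (hK : ∀ u ∈ Icc a b, ‖f'' u‖ ≤ K) :
    ∀ s ∈ Icc a b,
      ‖f s - (f a + ((s - a) / (b - a)) • (f b - f a))‖ ≤ K * (b - a) ^ 2 / 2 := by
  intro s hs
  obtain ⟨hsa, hsb⟩ := hs
  have hba : (0 : ℝ) < b - a := by linarith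
  have hK0 : 0 ≤ K := le_trans (norm_nonneg _) (hK a ⟨le_rfl, hab.le⟩)
  set lam : ℝ := (s - a) / (b - a) with hlamdef
  have hlam1 : lam * (b - a) = s - a := div_mul_cancel₀ _ (ne_of_gt hba)
  have hlam0 : 0 ≤ lam := div_nonneg (by linarith) hba.le
  have hlamle : lam ≤ 1 := by rw [hlamdef, div_le_one hba]; linarith
  have hmu2 : (1 - lam) * (a - b) = s - b := by
    have : (1 - lam) * (b - a) = b - s := by rw [sub_mul, one_mul, hlam1]; ring
    nlinarith [this]
  have hA := aux_taylor_left hf hf' hK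
  have hB := aux_taylor_right hf hf' hK
  have id1 : f s - (f a + lam • (f b - f a)) =
      (f s - f a - (s - a) • f' a) - lam • (f b - f a - (b - a) • f' a) := by
    rw [← hlam1]; module
  have id2 : f s - (f a + lam • (f b - f a)) =
      (f s - f b - (s - b) • f' b) - (1 - lam) • (f a - f b - (a - b) • f' b) := by
    rw [← hmu2]; module
  have n1 : ‖f s - (f a + lam • (f b - f a))‖
      ≤ K * (s - a) ^ 2 / 2 + lam * (K * (b - a) ^ 2 / 2) := by
    rw [id1]
    refine (norm_sub_le _ _).trans ?_
    have h1 := hA s ⟨hsa, hsb⟩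
    have h2 := hA b ⟨hab.le, le_rfl⟩
    have h3 : ‖lam • (f b - f a - (b - a) • f' a)‖
        = lam * ‖f b - f a - (b - a) • f' a‖ := by
      rw [norm_smul, Real.norm_eq_abs, abs_of_nonneg hlam0]
    rw [h3]
    have := mul_le_mul_of_nonneg_left h2 hlam0
    linarith
  have n2 : ‖f s - (f a + lam • (f b - f a))‖
      ≤ K * (b - s) ^ 2 / 2 + (1 - lam) * (K * (b - a) ^ 2 / 2) := by
    rw [id2]
    refine (norm_sub_le _ _).trans ?_
    have h1 := hB s ⟨hsa, hsb⟩
    have h2 := hB a ⟨le_rfl, hab.le⟩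
    have h3 : ‖(1 - lam) • (f a - f b - (a - b) • f' b)‖
        = (1 - lam) * ‖f a - f b - (a - b) • f' b‖ := by
      rw [norm_smul, Real.norm_eq_abs, abs_of_nonneg (by linarith)]
    rw [h3]
    have := mul_le_mul_of_nonneg_left h2 (show (0:ℝ) ≤ 1 - lam by linarith)
    linarith
  nlinarith [mul_nonneg hK0 (mul_nonneg (show (0:ℝ) ≤ s - a by linarith)
    (show (0:ℝ) ≤ b - s by linarith))]

end Aux

set_option maxHeartbeats 1000000 in
/-- Stiff-regime estimate causing order reduction: with the undamped RKC abscissae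
`d_j = (j² - 1)/(m² - 1)` and nodes `t_j = d_j τ` (`j = 1, …, m`), stage number chosen
so that `τρ ≤ βm²`, `y_F` twice continuously differentiable with `‖y_F''‖ ≤ K`, `ỹ_F`
its piecewise linear interpolant at the nodes, `f_S` `M`-Lipschitz, and
`y_S' = f_S(y_F + y_S)`, `ỹ_S' = f_S(ỹ_F + ỹ_S)` with `y_S(0) = ỹ_S(0)`, one has
`‖y_S(t) - ỹ_S(t)‖ ≤ 2 K M β e^{Mτ} τ² / ρ` for all `t ∈ [0, τ]`: a second-order
local interpolation error. -/
theorem stmt_16 (n m : ℕ) (hm : 2 ≤ m) (β ρ τ K M : ℝ)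
    (hβ : 0 < β) (hρ : 0 < ρ) (hτ : 0 < τ) (hK : 0 ≤ K) (hM : 0 ≤ M)
    (hsel : τ * ρ ≤ β * (m : ℝ) ^ 2)
    (d : ℕ → ℝ) (hd : ∀ j : ℕ, d j = ((j : ℝ) ^ 2 - 1) / ((m : ℝ) ^ 2 - 1))
    (t : ℕ → ℝ) (ht : ∀ j : ℕ, t j = d j * τ)
    (yF yF' yF'' ytF : ℝ → EuclideanSpace ℝ (Fin n))
    (hyF' : ∀ s ∈ Set.Icc (0 : ℝ) τ, HasDerivAt yF (yF' s) s)
    (hyF'' : ∀ s ∈ Set.Icc (0 : ℝ) τ, HasDerivAt yF' (yF'' s) s)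
    (hyF''cont : ContinuousOn yF'' (Set.Icc 0 τ))
    (hKbound : ∀ s ∈ Set.Icc (0 : ℝ) τ, ‖yF'' s‖ ≤ K)
    (hinterp : ∀ j : ℕ, 2 ≤ j → j ≤ m → ∀ s ∈ Set.Icc (t (j - 1)) (t j),
      ytF s = yF (t (j - 1))
        + ((s - t (j - 1)) / (t j - t (j - 1))) • (yF (t j) - yF (t (j - 1))))
    (fS : EuclideanSpace ℝ (Fin n) → EuclideanSpace ℝ (Fin n))
    (hfS : ∀ x y : EuclideanSpace ℝ (Fin n), ‖fS x - fS y‖ ≤ M * ‖x - y‖)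
    (yS ytS : ℝ → EuclideanSpace ℝ (Fin n))
    (hyS : ∀ s ∈ Set.Icc (0 : ℝ) τ, HasDerivAt yS (fS (yF s + yS s)) s)
    (hytS : ∀ s ∈ Set.Icc (0 : ℝ) τ, HasDerivAt ytS (fS (ytF s + ytS s)) s)
    (h0 : yS 0 = ytS 0) :
    ∀ s ∈ Set.Icc (0 : ℝ) τ,
      ‖yS s - ytS s‖ ≤ 2 * K * M * β * Real.exp (M * τ) * τ ^ 2 / ρ := by
  classical
  have hm2 : (2 : ℝ) ≤ (m : ℝ) := by exact_mod_cast hm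
  have hmpos : (0 : ℝ) < (m : ℝ) := by linarith
  have hden : (0 : ℝ) < (m : ℝ) ^ 2 - 1 := by nlinarith
  have ht1 : t 1 = 0 := by rw [ht, hd]; norm_num
  have htm : t m = τ := by rw [ht, hd]; field_simp
  -- interpolation error bound
  set Eint : ℝ := 2 * K * τ ^ 2 / (m : ℝ) ^ 2 with hEintdef
  have hEint0 : 0 ≤ Eint := by positivity
  have hE : ∀ s ∈ Icc (0 : ℝ) τ, ‖yF s - ytF s‖ ≤ Eint := by
    intro s hs
    set S : Finset ℕ := (Finset.Icc 2 m).filter (fun j => s ≤ t j) with hSdef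
    have hmS : m ∈ S := by
      rw [hSdef, Finset.mem_filter, Finset.mem_Icc]
      exact ⟨⟨hm, le_rfl⟩, by rw [htm]; exact hs.2⟩
    have hne : S.Nonempty := ⟨m, hmS⟩
    set j := S.min' hne with hjdef
    have hjS : j ∈ S := S.min'_mem hne
    have hminle : ∀ k ∈ S, j ≤ k := fun k hk => S.min'_le k hk
    clear_value j
    rw [hSdef, Finset.mem_filter, Finset.mem_Icc] at hjS
    obtain ⟨⟨hj2, hjm⟩, hsj⟩ := hjS
    have hjr : (2 : ℝ) ≤ (j : ℝ) := by exact_mod_cast hj2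
    have hjmr : (j : ℝ) ≤ (m : ℝ) := by exact_mod_cast hjm
    have hcast : ((j - 1 : ℕ) : ℝ) = (j : ℝ) - 1 := by
      have h := Nat.cast_sub (show 1 ≤ j by omega) (R := ℝ)
      simpa using h
    have ha_def : t (j - 1) = (((j : ℝ) - 1) ^ 2 - 1) / ((m : ℝ) ^ 2 - 1) * τ := by
      rw [ht, hd, hcast]
    have hb_def : t j = ((j : ℝ) ^ 2 - 1) / ((m : ℝ) ^ 2 - 1) * τ := by rw [ht, hd]
    have ha0 : 0 ≤ t (j - 1) := by
      rw [ha_def]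
      exact mul_nonneg (div_nonneg (by nlinarith) hden.le) hτ.le
    have hbτ : t j ≤ τ := by
      rw [hb_def]
      have h1 : ((j : ℝ) ^ 2 - 1) / ((m : ℝ) ^ 2 - 1) ≤ 1 := by
        rw [div_le_one hden]; nlinarith
      have := mul_le_mul_of_nonneg_right h1 hτ.le
      simpa using this
    have hgap : t j - t (j - 1) = (2 * (j : ℝ) - 1) / ((m : ℝ) ^ 2 - 1) * τ := by
      rw [ha_def, hb_def]
      field_simp
      ring
    have hab : t (j - 1) < t j := by
      have : 0 < t j - t (j - 1) := by
        rw [hgap]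
        exact mul_pos (div_pos (by nlinarith) hden) hτ
      linarith
    have hp : (j : ℝ) * (m : ℝ) ≤ (m : ℝ) ^ 2 := by
      rw [pow_two]; exact mul_le_mul_of_nonneg_right hjmr hmpos.le
    have hkey : (2 * (j : ℝ) - 1) * (m : ℝ) ≤ 2 * (m : ℝ) ^ 2 - 2 := by
      ring_nf
      ring_nf at hp
      linarith
    have hgaple : t j - t (j - 1) ≤ 2 * τ / (m : ℝ) := by
      rw [hgap]
      have h1 : (2 * (j : ℝ) - 1) / ((m : ℝ) ^ 2 - 1) ≤ 2 / (m : ℝ) := by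
        rw [div_le_div_iff₀ hden hmpos]
        linarith
      calc (2 * (j : ℝ) - 1) / ((m : ℝ) ^ 2 - 1) * τ
          ≤ 2 / (m : ℝ) * τ := mul_le_mul_of_nonneg_right h1 hτ.le
        _ = 2 * τ / (m : ℝ) := by ring
    have hleft : t (j - 1) ≤ s := by
      by_cases hj2' : j = 2
      · have : j - 1 = 1 := by omega
        rw [this, ht1]; exact hs.1
      · by_contra hlt
        push_neg at hlt
        have hmemS : j - 1 ∈ S := by
          rw [hSdef, Finset.mem_filter, Finset.mem_Icc]
          exact ⟨⟨by omega, by omega⟩, hlt.le⟩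
        have := hminle _ hmemS
        omega
    have hsubset : Icc (t (j - 1)) (t j) ⊆ Icc (0 : ℝ) τ := Icc_subset_Icc ha0 hbτ
    rw [hinterp j hj2 hjm s ⟨hleft, hsj⟩]
    refine le_trans (aux_interp hab (fun u hu => hyF' u (hsubset hu))
      (fun u hu => hyF'' u (hsubset hu)) (fun u hu => hKbound u (hsubset hu))
      s ⟨hleft, hsj⟩) ?_
    have h1 : (t j - t (j - 1)) ^ 2 ≤ (2 * τ / (m : ℝ)) ^ 2 := by
      have h0 : 0 ≤ t j - t (j - 1) := by linarith
      nlinarith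
    have h2 := mul_le_mul_of_nonneg_left h1 hK
    have h3 : K * (2 * τ / (m : ℝ)) ^ 2 / 2 = Eint := by
      rw [hEintdef]; field_simp
    linarith
  -- Gronwall
  have hcont : ContinuousOn (fun s => yS s - ytS s) (Icc (0 : ℝ) τ) :=
    fun u hu => ((hyS u hu).sub (hytS u hu)).continuousAt.continuousWithinAt
  have hderiv : ∀ x ∈ Ico (0 : ℝ) τ,
      HasDerivWithinAt (fun s => yS s - ytS s)
        (fS (yF x + yS x) - fS (ytF x + ytS x)) (Ici x) x := by
    intro x hx
    exact ((hyS x (Ico_subset_Icc_self hx)).sub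
      (hytS x (Ico_subset_Icc_self hx))).hasDerivWithinAt
  have hbound : ∀ x ∈ Ico (0 : ℝ) τ,
      ‖fS (yF x + yS x) - fS (ytF x + ytS x)‖ ≤ M * ‖yS x - ytS x‖ + M * Eint := by
    intro x hx
    have h1 := hfS (yF x + yS x) (ytF x + ytS x)
    have h2 : (yF x + yS x) - (ytF x + ytS x) = (yF x - ytF x) + (yS x - ytS x) := by
      abel
    rw [h2] at h1
    have h3 := norm_add_le (yF x - ytF x) (yS x - ytS x)
    have h4 := hE x (Ico_subset_Icc_self hx)
    calc ‖fS (yF x + yS x) - fS (ytF x + ytS x)‖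
        ≤ M * ‖(yF x - ytF x) + (yS x - ytS x)‖ := h1
      _ ≤ M * (‖yF x - ytF x‖ + ‖yS x - ytS x‖) := mul_le_mul_of_nonneg_left h3 hM
      _ ≤ M * (Eint + ‖yS x - ytS x‖) := by nlinarith
      _ = M * ‖yS x - ytS x‖ + M * Eint := by ring
  have hg := norm_le_gronwallBound_of_norm_deriv_right_le hcont hderiv
    (show ‖yS 0 - ytS 0‖ ≤ 0 by simp [h0]) hbound
  intro s hs
  have hb := hg s hs
  by_cases hM0 : M = 0
  · subst hM0
    rw [gronwallBound_K0] at hb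
    simp only [zero_mul, mul_zero, zero_add, zero_div] at hb ⊢
    simpa using hb
  · rw [gronwallBound_of_K_ne_0 hM0] at hb
    have hmm : M * Eint / M = Eint := by field_simp
    rw [hmm] at hb
    have hb' : ‖yS s - ytS s‖ ≤ Eint * (Real.exp (M * s) - 1) := by
      simpa using hb
    have hMτ0 : 0 ≤ M * τ := mul_nonneg hM hτ.le
    have hexp : Real.exp (M * τ) - 1 ≤ M * τ * Real.exp (M * τ) := by
      have h1 : 1 - M * τ ≤ Real.exp (-(M * τ)) := by
        linarith [Real.add_one_le_exp (-(M * τ))]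
      have h2 : Real.exp (-(M * τ)) * Real.exp (M * τ) = 1 := by
        rw [← Real.exp_add]; simp
      nlinarith [Real.exp_pos (M * τ)]
    have hmono : Real.exp (M * s) ≤ Real.exp (M * τ) :=
      Real.exp_le_exp.2 (mul_le_mul_of_nonneg_left hs.2 hM)
    have hstep : Eint * (Real.exp (M * s) - 1) ≤ Eint * (M * τ * Real.exp (M * τ)) := by
      apply mul_le_mul_of_nonneg_left _ hEint0
      linarith
    have hfin : Eint * (M * τ * Real.exp (M * τ))
        ≤ 2 * K * M * β * Real.exp (M * τ) * τ ^ 2 / ρ := by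
      rw [hEintdef, div_mul_eq_mul_div, div_le_div_iff₀ (by positivity) hρ]
      nlinarith [mul_le_mul_of_nonneg_left hsel
        (show (0:ℝ) ≤ 2 * K * M * τ ^ 2 * Real.exp (M * τ) by positivity),
        Real.exp_pos (M * τ)]
    linarith
end
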